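/- arXiv:1810.05938 — 4 statements merged into one kernel-verified Lean document; each statement's English description precedes it below -/
import Mathlib

section
/- In a semigroup S with involution * satisfying axioms (i)–(viii) of the algebraic characterisation, the map ŝ = (s ∨ s*, s, s* ∨ s) with partial composition ŝ ∘ t̂ = (s ∨ s*, st, t* ∨ t) defined when s* ∨ s = t ∨ t* yields a groupoid: composition is associative where defined, each î_a = (a, a, a) for a = s ∨ s* is an identity, and each ŝ has inverse (s* ∨ s, s*, s ∨ s*). -/
/-- From an algebra `(S, ∨, ∧, *)` satisfying axioms (i)–(viii), the triples
`ŝ = (s ∨ s*, s, s* ∨ s)` with partial composition `ŝ ∘ t̂ = (s ∨ s*, st, t* ∨ t)`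
(defined when `s* ∨ s = t ∨ t*`) form a groupoid: composition is well defined and
associative where defined, `î_a = (a,a,a)` is an identity at each object `a = s ∨ s*`,
and `ŝ` has inverse the triple of `s*`. -/
theorem algebra_gives_groupoid {S : Type*} (sup inf : S → S → S) (st : S → S)
    (sup_assoc : ∀ s t u, sup (sup s t) u = sup s (sup t u))
    (inf_assoc : ∀ s t u, inf (inf s t) u = inf s (inf t u))
    (st_invol : ∀ s, st (st s) = s)
    (ax3 : ∀ s, sup s (st s) = inf s (st s) ∧ st (inf s (st s)) = inf s (st s))
    (ax4 : ∀ s, sup (sup s (st s)) s = s ∧ inf (inf s (st s)) s = s)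
    (ax5 : ∀ s, (sup s s = s → s = st s) ∧ (inf s s = s → s = st s))
    (ax6 : ∀ s t, sup (sup s (st s)) (inf (inf s (st t)) t) = s ∧
                  inf (inf s (st s)) (sup (sup s (st t)) t) = s ∧
                  sup (inf (inf t (st t)) s) (sup (st s) s) = s ∧
                  inf (sup (sup t (st t)) s) (inf (st s) s) = s)
    (ax7 : ∀ s t, sup (sup (sup s (st s)) t) (st t)
                  = sup (sup (sup s (st s)) t) (st (sup (sup s (st s)) t)) ∧
                  inf (inf (inf s (st s)) t) (st t)
                  = inf (inf (inf s (st s)) t) (st (inf (inf s (st s)) t)))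
    (ax8 : ∀ s t, sup (st s) s = sup t (st t) →
      sup (sup s t) (st (sup s t)) = sup s (st s) ∧
      sup (st (sup s t)) (sup s t) = sup (st t) t ∧
      inf (inf s t) (st (inf s t)) = inf s (st s) ∧
      inf (st (inf s t)) (inf s t) = inf (st t) t) :
    letI hat : S → S × S × S := fun s => (sup s (st s), s, sup (st s) s)
    letI comp : S × S × S → S × S × S → S × S × S := fun x y => (x.1, sup x.2.1 y.2.1, y.2.2)
    -- composition is well defined: the composite of `ŝ` and `t̂` is the triple of `s ∨ t`
    (∀ s t : S, sup (st s) s = sup t (st t) → comp (hat s) (hat t) = hat (sup s t)) ∧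
    -- associativity where defined
    (∀ s t u : S, sup (st s) s = sup t (st t) → sup (st t) t = sup u (st u) →
      comp (comp (hat s) (hat t)) (hat u) = comp (hat s) (comp (hat t) (hat u))) ∧
    -- each object `a = s ∨ s*` gives an identity triple `(a, a, a)`
    (∀ s : S, hat (sup s (st s)) = ((sup s (st s), sup s (st s), sup s (st s)) : S × S × S)) ∧
    (∀ s : S, comp (hat (sup s (st s))) (hat s) = hat s ∧
              comp (hat s) (hat (sup (st s) s)) = hat s) ∧
    -- the triple of `s*` is a two-sided inverse of `ŝ`
    (∀ s : S, comp (hat s) (hat (st s)) = hat (sup s (st s)) ∧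
              comp (hat (st s)) (hat s) = hat (sup (st s) s)) := by

  -- a = s ∨ s* is a *-fixed idempotent
  have hstA : ∀ s, st (sup s (st s)) = sup s (st s) := by
    intro s
    rcases ax3 s with ⟨h1, h2⟩
    rw [h1, h2]
  have hstB : ∀ s, st (sup (st s) s) = sup (st s) s := by
    intro s
    have := hstA (st s)
    rwa [st_invol] at this
  have hAs : ∀ s, sup (sup s (st s)) s = s := fun s => (ax4 s).1
  have hAA : ∀ s, sup (sup s (st s)) (sup s (st s)) = sup s (st s) := by
    intro s
    rw [← sup_assoc, hAs]
  have hBB : ∀ s, sup (sup (st s) s) (sup (st s) s) = sup (st s) s := by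
    intro s
    have := hAA (st s)
    rwa [st_invol] at this
  have hsB : ∀ s, sup s (sup (st s) s) = s := by
    intro s
    rw [← sup_assoc, hAs]
  refine ⟨?_, ?_, ?_, ?_, ?_⟩
  · intro s t h
    obtain ⟨h1, h2, -, -⟩ := ax8 s t h
    simp only [h1, h2]
  · intro s t u _ _
    simp only [sup_assoc]
  · intro s
    simp only [hstA, hAA]
  · intro s
    constructor
    · simp only [hstA, hAA, hAs]
    · simp only [hstB, hBB, hsB]
  · intro s
    constructor
    · simp only [st_invol, hstA, hAA]
    · simp only [st_invol, hstB, hBB]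
end

section
/- In an algebra (S, ∨, ∧, *) satisfying axioms (i)–(viii), the set of elements {s ∨ s* : s ∈ S} is closed under both ∨ and ∧ and forms a skew lattice (both operations are idempotent bands satisfying the absorption laws). -/
/-- In an algebra `(S, ∨, ∧, *)` satisfying the axioms, the set `{s ∨ s* : s ∈ S}` is closed
under both operations and forms a skew lattice: both operations are idempotent on it and
the absorption laws hold. -/
theorem objects_form_skew_lattice {S : Type*} (sup inf : S → S → S) (st : S → S)
    (sup_assoc : ∀ s t u, sup (sup s t) u = sup s (sup t u))
    (inf_assoc : ∀ s t u, inf (inf s t) u = inf s (inf t u))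
    (st_invol : ∀ s, st (st s) = s)
    (ax3 : ∀ s, sup s (st s) = inf s (st s) ∧ st (inf s (st s)) = inf s (st s))
    (ax4 : ∀ s, sup (sup s (st s)) s = s ∧ inf (inf s (st s)) s = s)
    (ax5 : ∀ s, (sup s s = s → s = st s) ∧ (inf s s = s → s = st s))
    (ax6 : ∀ s t, sup (sup s (st s)) (inf (inf s (st t)) t) = s ∧
                  inf (inf s (st s)) (sup (sup s (st t)) t) = s ∧
                  sup (inf (inf t (st t)) s) (sup (st s) s) = s ∧
                  inf (sup (sup t (st t)) s) (inf (st s) s) = s)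
    (ax7 : ∀ s t, sup (sup (sup s (st s)) t) (st t)
                  = sup (sup (sup s (st s)) t) (st (sup (sup s (st s)) t)) ∧
                  inf (inf (inf s (st s)) t) (st t)
                  = inf (inf (inf s (st s)) t) (st (inf (inf s (st s)) t))) :
    letI E : Set S := {x | ∃ s : S, x = sup s (st s)}
    (∀ x ∈ E, ∀ y ∈ E, sup x y ∈ E ∧ inf x y ∈ E) ∧
    (∀ x ∈ E, sup x x = x ∧ inf x x = x) ∧
    (∀ x ∈ E, ∀ y ∈ E, sup x (inf x y) = x ∧ inf x (sup x y) = x ∧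
      sup (inf x y) y = y ∧ inf (sup x y) y = y) := by
  have heq : ∀ s : S, sup s (st s) = inf s (st s) := fun s => (ax3 s).1
  have hst : ∀ s : S, st (sup s (st s)) = sup s (st s) := by
    intro s
    rw [heq s]; exact (ax3 s).2
  have hsup_idem : ∀ s : S, sup (sup s (st s)) (sup s (st s)) = sup s (st s) := by
    intro s
    have h4 := (ax4 (st s)).1
    rw [st_invol] at h4
    rw [sup_assoc] at h4
    rw [sup_assoc, h4]
  have hinf_idem : ∀ s : S, inf (inf s (st s)) (inf s (st s)) = inf s (st s) := by
    intro s
    have h4 := (ax4 (st s)).2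
    rw [st_invol] at h4
    rw [inf_assoc] at h4
    rw [inf_assoc, h4]
  have hsup_idem' : ∀ s : S, sup (sup s (st s)) (sup s (st s)) = sup s (st s) := hsup_idem
  have hinf_idem'' : ∀ s : S, inf (sup s (st s)) (sup s (st s)) = sup s (st s) := by
    intro s; rw [heq s]; exact hinf_idem s
  refine ⟨?_, ?_, ?_⟩
  · rintro x ⟨s, rfl⟩ y ⟨t, rfl⟩
    constructor
    · refine ⟨sup (sup s (st s)) t, ?_⟩
      rw [← sup_assoc]
      exact (ax7 s t).1
    · refine ⟨inf (inf s (st s)) t, ?_⟩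
      have h : inf (sup s (st s)) (sup t (st t))
          = inf (inf (inf s (st s)) t) (st (inf (inf s (st s)) t)) := by
        rw [← (ax7 s t).2, inf_assoc, ← heq s, ← heq t]
      exact h.trans (heq (inf (inf s (st s)) t)).symm
  · rintro x ⟨s, rfl⟩
    exact ⟨hsup_idem s, hinf_idem'' s⟩
  · rintro x ⟨s, rfl⟩ y ⟨t, rfl⟩
    refine ⟨?_, ?_, ?_, ?_⟩
    · have h6 := (ax6 (sup s (st s)) (st t)).1
      rw [st_invol, hst s, hsup_idem s, inf_assoc, ← heq t] at h6
      exact h6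
    · have h6 := (ax6 (sup s (st s)) (st t)).2.1
      rw [st_invol, hst s, hinf_idem'' s, sup_assoc] at h6
      exact h6
    · have h6 := (ax6 (sup t (st t)) (sup s (st s))).2.2.1
      rw [hst s, hst t, hinf_idem'' s, hsup_idem t] at h6
      exact h6
    · have h6 := (ax6 (sup t (st t)) (sup s (st s))).2.2.2
      rw [hst s, hst t, hsup_idem s, hinf_idem'' t] at h6
      exact h6
end

section
/- Let G act by automorphisms on a skew lattice B, and define on S = G × B two operations: (u,a) ∨' (v,b) = (uv, a^v ∨ b) and (u,a) ∧' (v,b) = (uv, a^v ∧ b), with (u,a)* = (u⁻¹, a^{u⁻¹}). Then s ∨' s* = s ∧' s* for every s ∈ S, and the absorption-type identity s ∨' (s* ∨' s ∧' t* ∧' t) = s holds, i.e., s ∨' ((s* s) ∧' (t* t)) = s where s*s denotes (u,a)*(u,a) = (1,a). -/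
/-- Let `G` act by automorphisms on a skew lattice `B`, and give `S = G × B` the two
semidirect-product operations `(u,a) ∨' (v,b) = (uv, a^v ∨ b)`,
`(u,a) ∧' (v,b) = (uv, a^v ∧ b)`, with `(u,a)* = (u⁻¹, a^{u⁻¹})`. Then
`s ∨' s* = s ∧' s*` for all `s`, and the absorption-type identity
`s ∨' ((s* s) ∧' (t* t)) = s` holds. -/
theorem semidirect_skew_absorption {G B : Type*} [Group G]
    (sup inf : B → B → B) (act : B → G → B)
    (sup_assoc : ∀ a b c, sup (sup a b) c = sup a (sup b c))
    (inf_assoc : ∀ a b c, inf (inf a b) c = inf a (inf b c))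
    (abs₁ : ∀ a b, sup a (inf a b) = a)
    (abs₂ : ∀ a b, inf a (sup a b) = a)
    (abs₃ : ∀ a b, sup (inf a b) b = b)
    (abs₄ : ∀ a b, inf (sup a b) b = b)
    (act_sup : ∀ a b g, act (sup a b) g = sup (act a g) (act b g))
    (act_inf : ∀ a b g, act (inf a b) g = inf (act a g) (act b g))
    (act_one : ∀ a, act a 1 = a)
    (act_mul : ∀ a g h, act a (g * h) = act (act a g) h) :
    letI vee : G × B → G × B → G × B := fun p q => (p.1 * q.1, sup (act p.2 q.1) q.2)
    letI wedge : G × B → G × B → G × B := fun p q => (p.1 * q.1, inf (act p.2 q.1) q.2)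
    letI star : G × B → G × B := fun p => (p.1⁻¹, act p.2 p.1⁻¹)
    (∀ s : G × B, vee s (star s) = wedge s (star s)) ∧
    (∀ s t : G × B, vee s (wedge (wedge (star s) s) (wedge (star t) t)) = s) := by
  have sup_idem : ∀ a, sup a a = a := fun a => by
    have := abs₁ a (sup a a)
    rw [abs₂] at this; exact this
  have inf_idem : ∀ a, inf a a = a := fun a => by
    have := abs₂ a (inf a a)
    rw [abs₁] at this; exact this
  constructor
  · intro s
    simp only [mul_inv_cancel, sup_idem, inf_idem]
  · intro s t
    obtain ⟨u, a⟩ := s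
    obtain ⟨v, b⟩ := t
    simp only [← act_mul, inv_mul_cancel, act_one, inf_idem, one_mul, mul_one, abs₁]
end

section
/- Let G act by automorphisms on a band B. In the category with objects B and morphisms triples (b, g, b^g) for b ∈ B, g ∈ G, with composition (b,g,b^g)∘(c,h,c^h) = (b, gh, b^{gh}) defined when b^g = c, the pseudoproduct (b,g,b^g) ⊗ (c,h,c^h) = (b ∧ c^{g⁻¹}, gh, b^{gh} ∧ c^h) is associative. -/
/-- Let `G` act by automorphisms on a band `B`. On the set of triples `(b, g, b^g)`,
the pseudoproduct `(b,g,b^g) ⊗ (c,h,c^h) = (b ∧ c^{g⁻¹}, gh, b^{gh} ∧ c^h)` is associative. -/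
theorem pseudoproduct_assoc {G B : Type*} [Group G] (m : B → B → B) (act : B → G → B)
    (m_assoc : ∀ a b c, m (m a b) c = m a (m b c))
    (m_idem : ∀ a, m a a = a)
    (act_m : ∀ a b g, act (m a b) g = m (act a g) (act b g))
    (act_one : ∀ a, act a 1 = a)
    (act_mul : ∀ a g h, act a (g * h) = act (act a g) h) :
    letI T : Set (B × G × B) := {x | x.2.2 = act x.1 x.2.1}
    letI op : B × G × B → B × G × B → B × G × B := fun x y =>
      (m x.1 (act y.1 x.2.1⁻¹), x.2.1 * y.2.1,
        m (act x.1 (x.2.1 * y.2.1)) (act y.1 y.2.1))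
    ∀ x ∈ T, ∀ y ∈ T, ∀ z ∈ T, op (op x y) z = op x (op y z) := by
  intro x _ y _ z _
  obtain ⟨a, g, a'⟩ := x
  obtain ⟨b, h, b'⟩ := y
  obtain ⟨c, k, c'⟩ := z
  simp only [Prod.mk.injEq]
  refine ⟨?_, mul_assoc g h k, ?_⟩
  · rw [mul_inv_rev, act_mul, act_m, m_assoc]
  · simp only [act_m, ← act_mul, m_assoc, mul_assoc, inv_mul_cancel_left]
end
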